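/- For every natural number n, the number of words of length n+1 over {−1, 0, 0̄, 1} summing to 0, with all partial sums nonnegative and with strictly positive partial sum before every occurrence of 0̄, equals C_{n+1}, the (n+1)-st Catalan number. -/
import Mathlib

inductive Letter : Type
  | up | zero | zbar | down
deriving DecidableEq

def val : Letter → ℤ
  | .up => 1
  | .zero => 0
  | .zbar => 0
  | .down => -1

open List DyckStep

/-- value of a Dyck step -/
def dval : DyckStep → ℤ
  | U => 1
  | D => -1

/-- sum of values -/
def dsum (l : List DyckStep) : ℤ := (l.map dval).sum

@[simp] lemma dsum_nil : dsum [] = 0 := rfl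
@[simp] lemma dsum_cons (x : DyckStep) (l : List DyckStep) :
    dsum (x :: l) = dval x + dsum l := rfl

/-- encode a letter as a pair of Dyck steps -/
def E : Letter → List DyckStep
  | .up => [U, U]
  | .zero => [U, D]
  | .zbar => [D, U]
  | .down => [D, D]

/-- encode a word as a Dyck step list -/
def enc (w : List Letter) : List DyckStep := w.flatMap E

@[simp] lemma enc_nil : enc [] = [] := rfl
@[simp] lemma enc_cons (a : Letter) (w : List Letter) :
    enc (a :: w) = E a ++ enc w := rfl

lemma length_enc (w : List Letter) : (enc w).length = 2 * w.length := by
  induction w with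
  | nil => rfl
  | cons a w ih => cases a <;> simp [E, ih] <;> ring

lemma dsum_enc (w : List Letter) : dsum (enc w) = 2 * (w.map val).sum := by
  induction w with
  | nil => rfl
  | cons a w ih =>
    have : (map dval (enc w)).sum = dsum (enc w) := rfl
    cases a <;> simp [E, dsum, ih, val, dval] <;> rw [this, ih] <;> ring

/-- decode pairs of Dyck steps -/
def dec : List DyckStep → List Letter
  | [] => []
  | [_] => []
  | U :: U :: l => .up :: dec l
  | U :: D :: l => .zero :: dec l
  | D :: U :: l => .zbar :: dec l
  | D :: D :: l => .down :: dec l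

lemma enc_dec : ∀ l : List DyckStep, l.length % 2 = 0 → enc (dec l) = l
  | [], _ => rfl
  | [_], h => by simp at h
  | U :: U :: l, h => by simp [dec, E, enc_dec l (by simp at h; omega)]
  | U :: D :: l, h => by simp [dec, E, enc_dec l (by simp at h; omega)]
  | D :: U :: l, h => by simp [dec, E, enc_dec l (by simp at h; omega)]
  | D :: D :: l, h => by simp [dec, E, enc_dec l (by simp at h; omega)]

lemma dec_enc (w : List Letter) : dec (enc w) = w := by
  induction w with
  | nil => rfl
  | cons a w ih =>
    cases a
    · show Letter.up :: dec (enc w) = _; rw [ih]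
    · show Letter.zero :: dec (enc w) = _; rw [ih]
    · show Letter.zbar :: dec (enc w) = _; rw [ih]
    · show Letter.down :: dec (enc w) = _; rw [ih]

/-- word condition at starting height c -/
def Wc (c : ℤ) (w : List Letter) : Prop :=
  (∀ p, p <+: w → 0 ≤ c + (p.map val).sum) ∧
    ∀ p t, w = p ++ Letter.zbar :: t → 0 < c + (p.map val).sum

/-- Dyck condition at starting height c -/
def Dc (c : ℤ) (l : List DyckStep) : Prop := ∀ q, q <+: l → 0 ≤ c + dsum q

lemma Dc_nil {c : ℤ} : Dc c [] ↔ 0 ≤ c := by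
  constructor
  · intro h; simpa using h [] nil_prefix
  · rintro h q hq; rw [prefix_nil.mp hq]; simpa using h

lemma Dc_cons {c : ℤ} {x : DyckStep} {l : List DyckStep} :
    Dc c (x :: l) ↔ 0 ≤ c ∧ Dc (c + dval x) l := by
  constructor
  · intro h
    refine ⟨by simpa using h [] nil_prefix, fun q hq => ?_⟩
    have := h (x :: q) (cons_prefix_cons.mpr ⟨rfl, hq⟩)
    simp at this; omega
  · rintro ⟨h0, h1⟩ q hq
    cases q with
    | nil => simpa using h0
    | cons y q2 =>
      obtain ⟨rfl, hq2⟩ := cons_prefix_cons.mp hq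
      have := h1 q2 hq2; simp; omega

lemma Wc_nonneg {c : ℤ} {w : List Letter} (h : Wc c w) : 0 ≤ c := by
  simpa using h.1 [] nil_prefix

lemma Wc_nil {c : ℤ} : Wc c [] ↔ 0 ≤ c := by
  constructor
  · exact Wc_nonneg
  · intro h
    refine ⟨fun p hp => by rw [prefix_nil.mp hp]; simpa using h, fun p t hpt => ?_⟩
    exact absurd hpt (by simp)

lemma Wc_cons {c : ℤ} {a : Letter} {w : List Letter} :
    Wc c (a :: w) ↔ 0 ≤ c ∧ (a = .zbar → 0 < c) ∧ Wc (c + val a) w := by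
  constructor
  · rintro ⟨h1, h2⟩
    refine ⟨by simpa using h1 [] nil_prefix, ?_, ?_, ?_⟩
    · rintro rfl; simpa using h2 [] w rfl
    · intro p hp
      have := h1 (a :: p) (cons_prefix_cons.mpr ⟨rfl, hp⟩)
      simp at this ⊢; omega
    · intro p t hpt
      have := h2 (a :: p) t (by rw [hpt, cons_append])
      simp at this ⊢; omega
  · rintro ⟨h0, hz, h1, h2⟩
    constructor
    · rintro p hp
      cases p with
      | nil => simpa using h0
      | cons b p2 =>
        obtain ⟨rfl, hp2⟩ := cons_prefix_cons.mp hp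
        have := h1 p2 hp2; simp at this ⊢; omega
    · rintro p t hpt
      cases p with
      | nil =>
        simp only [nil_append, cons.injEq] at hpt
        simpa using hz hpt.1
      | cons b p2 =>
        simp only [cons_append, cons.injEq] at hpt
        obtain ⟨rfl, hpt2⟩ := hpt
        have := h2 p2 t hpt2; simp at this ⊢; omega

lemma main_iff : ∀ (w : List Letter) (c : ℤ), Dc (2 * c) (enc w) ↔ Wc c w := by
  intro w
  induction w with
  | nil => intro c; rw [enc_nil, Dc_nil, Wc_nil]; omega
  | cons a w ih =>
    intro c
    rw [Wc_cons]
    cases a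
    · rw [show enc (.up :: w) = U :: U :: enc w from rfl, Dc_cons, Dc_cons,
        show 2 * c + dval U + dval U = 2 * (c + 1) from by simp [dval]; ring, ih]
      simp only [val]
      constructor
      · rintro ⟨h0, h1, h2⟩
        exact ⟨by omega, by rintro ⟨⟩, h2⟩
      · rintro ⟨h0, -, h2⟩
        exact ⟨by omega, by simp [dval]; omega, h2⟩
    · rw [show enc (.zero :: w) = U :: D :: enc w from rfl, Dc_cons, Dc_cons,
        show 2 * c + dval U + dval D = 2 * c from by simp [dval], ih]
      simp only [val]
      constructor
      · rintro ⟨h0, h1, h2⟩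
        exact ⟨by omega, by rintro ⟨⟩, by simpa using h2⟩
      · rintro ⟨h0, -, h2⟩
        exact ⟨by omega, by simp [dval]; omega, by simpa using h2⟩
    · rw [show enc (.zbar :: w) = D :: U :: enc w from rfl, Dc_cons, Dc_cons,
        show 2 * c + dval D + dval U = 2 * c from by simp [dval], ih]
      simp only [val]
      constructor
      · rintro ⟨h0, h1, h2⟩
        simp [dval] at h1
        exact ⟨by omega, fun _ => by omega, by simpa using h2⟩
      · rintro ⟨h0, hz, h2⟩
        have := hz (by first | rfl | trivial)
        exact ⟨by omega, by simp [dval]; omega, by simpa using h2⟩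
    · rw [show enc (.down :: w) = D :: D :: enc w from rfl, Dc_cons, Dc_cons,
        show 2 * c + dval D + dval D = 2 * (c + -1) from by simp [dval]; ring, ih]
      simp only [val]
      constructor
      · rintro ⟨h0, h1, h2⟩
        exact ⟨by omega, by rintro ⟨⟩, h2⟩
      · rintro ⟨h0, -, h2⟩
        have := Wc_nonneg h2
        exact ⟨by omega, by simp [dval]; omega, h2⟩

lemma count_sub (l : List DyckStep) : (l.count U : ℤ) - l.count D = dsum l := by
  induction l with
  | nil => rfl
  | cons x l ih => cases x <;> simp [dval, List.count_cons] <;> omega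


lemma count_add (l : List DyckStep) : l.count U + l.count D = l.length := by
  induction l with
  | nil => rfl
  | cons x l ih => cases x <;> simp [List.count_cons] <;> omega

theorem card_Gset'_eq_catalan (n : ℕ) :
    {w : List Letter | w.length = n + 1 ∧ (w.map val).sum = 0 ∧
      (∀ p, p <+: w → 0 ≤ (p.map val).sum) ∧
      ∀ p t, w = p ++ Letter.zbar :: t → 0 < (p.map val).sum}.ncard =
    catalan (n + 1) := by
  rw [← DyckWord.card_dyckWord_semilength_eq_catalan (n + 1),
    ← Nat.card_eq_fintype_card, ← Nat.card_coe_set_eq]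
  refine Nat.card_congr ?_
  have key : ∀ w : List Letter,
      ((w.map val).sum = 0 ∧ (∀ p, p <+: w → 0 ≤ (p.map val).sum) ∧
        ∀ p t, w = p ++ Letter.zbar :: t → 0 < (p.map val).sum) ↔
      ((enc w).count U = (enc w).count D ∧
        ∀ i, ((enc w).take i).count D ≤ ((enc w).take i).count U) := by
    intro w
    constructor
    · rintro ⟨hsum, hpre, hbar⟩
      have hDc : Dc 0 (enc w) := by
        rw [show (0 : ℤ) = 2 * 0 by ring, main_iff]
        exact ⟨fun p hp => by simpa using hpre p hp,
          fun p t hpt => by simpa using hbar p t hpt⟩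
      have h1 := count_sub (enc w)
      rw [dsum_enc, hsum] at h1
      refine ⟨by omega, fun i => ?_⟩
      have h2 := hDc ((enc w).take i) (take_prefix i (enc w))
      have h3 := count_sub ((enc w).take i)
      omega
    · rintro ⟨hcnt, htake⟩
      have hDc : Dc 0 (enc w) := by
        intro q hq
        have h2 := count_sub q
        have h3 := htake q.length
        rw [← prefix_iff_eq_take.mp hq] at h3
        omega
      rw [show (0 : ℤ) = 2 * 0 by ring, main_iff] at hDc
      obtain ⟨hpre, hbar⟩ := hDc
      have h1 := count_sub (enc w)
      rw [dsum_enc] at h1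
      refine ⟨by omega, fun p hp => by simpa using hpre p hp,
        fun p t hpt => by simpa using hbar p t hpt⟩
  refine
    { toFun := fun w =>
        ⟨⟨enc w.1, ((key w.1).mp w.2.2).1, ((key w.1).mp w.2.2).2⟩, ?_⟩
      invFun := fun p => ⟨dec p.1.toList, ?_⟩
      left_inv := fun w => Subtype.ext (dec_enc w.1)
      right_inv := fun p => ?_ }
  · show (enc w.1).count U = n + 1
    have h1 := ((key w.1).mp w.2.2).1
    have h2 := count_add (enc w.1)
    have h3 := length_enc w.1
    have h4 := w.2.1
    omega
  · obtain ⟨⟨l, hc, ht⟩, hs⟩ := p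
    have hlen : l.length = 2 * (n + 1) := by
      have := DyckWord.two_mul_semilength_eq_length (p := ⟨l, hc, ht⟩)
      simp only [DyckWord.semilength] at this hs
      omega
    have hed : enc (dec l) = l := enc_dec l (by omega)
    have hl2 : (dec l).length = n + 1 := by
      have := length_enc (dec l)
      rw [hed] at this
      omega
    refine ⟨hl2, (key (dec l)).mpr ?_⟩
    rw [hed]
    exact ⟨hc, ht⟩
  · obtain ⟨⟨l, hc, ht⟩, hs⟩ := p
    refine Subtype.ext (DyckWord.ext ?_)
    show enc (dec l) = l
    have hlen : l.length = 2 * (n + 1) := by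
      have := DyckWord.two_mul_semilength_eq_length (p := ⟨l, hc, ht⟩)
      simp only [DyckWord.semilength] at this hs
      omega
    exact enc_dec l (by omega)
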